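/- arXiv:1810.06509 — 4 statements merged into one kernel-verified Lean document; each statement's English description precedes it below -/
import Mathlib

section
/- (PicCoLO with mirror descent.) Let E be a real inner product space and Π ⊆ E a nonempty convex set. Fix N ≥ 1, weights w_1, …, w_N > 0, vectors g_1, …, g_N and ĝ_1, …, ĝ_N in E, and set e_n := g_n − ĝ_n. Let R_0, R_1, …, R_N : E → ℝ be differentiable, with each R_n being α_n-strongly convex on E where α_n > 0, and let M_N ∈ ℝ. Suppose π̂_1, …, π̂_{N+1} ∈ Π and π_1, …, π_N ∈ Π satisfy, for every n = 1, …, N and every π ∈ Π: (i) ⟪w_n·ĝ_n + ∇R_{n−1}(π_n) − ∇R_{n−1}(π̂_n), π_n − π⟫ ≤ 0; (ii) ⟪w_n·e_n + ∇R_n(π̂_{n+1}) − ∇R_n(π_n), π̂_{n+1} − π⟫ ≤ 0; and (iii) B_{R_0}(π‖π̂_1) + Σ_{n=1}^N (B_{R_n}(π‖π_n) − B_{R_{n−1}}(π‖π_n)) ≤ M_N. Then for every π ∈ Π: Σ_{n=1}^N w_n·⟪g_n, π_n − π⟫ ≤ M_N + Σ_{n=1}^N ( (w_n²/(2α_n))·‖e_n‖²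 − (α_{n−1}/2)·‖π_n − π̂_n‖² ). -/
/-!
In round `n`, the three-point identity for Bregman divergences turns the first-order conditions of
the two steps into a bound of `w_n⟪g_n, π_n - π⟫` by the telescoping term
`B_{R_{n-1}}(π‖π̂_n) - B_{R_n}(π‖π̂_{n+1})`, the regularizer increment
`B_{R_n}(π‖π_n) - B_{R_{n-1}}(π‖π_n)`, the cross term `w_n⟪e_n, π_n - π̂_{n+1}⟫`, and
`-B_{R_{n-1}}(π_n‖π̂_n) - B_{R_n}(π̂_{n+1}‖π_n)`. Strong convexity bounds these two divergences
below by `(α/2)‖·‖²`, and by Young's inequality the second one absorbs the cross term up to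
`(w_n²/(2α_n))‖e_n‖²`. Summed over `n`, the telescope leaves `B_{R_0}(π‖π̂_1)` minus a nonnegative
divergence, and (iii) bounds it together with the increments by `M_N`.
-/
open scoped RealInnerProductSpace

/-- Bregman divergence `B_R(z‖x) = R z − R x − ⟪∇R x, z − x⟫` generated by `R`
with gradient field `gradR`. -/
noncomputable def breg {E : Type*} [NormedAddCommGroup E] [InnerProductSpace ℝ E]
    (R : E → ℝ) (gradR : E → E) (z x : E) : ℝ :=
  R z - R x - ⟪gradR x, z - x⟫

/-- `F` is `α`-strongly convex on the set `K`. -/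
def StrongConvexOnSet {E : Type*} [NormedAddCommGroup E] [NormedSpace ℝ E]
    (K : Set E) (α : ℝ) (F : E → ℝ) : Prop :=
  ∀ ⦃x⦄, x ∈ K → ∀ ⦃y⦄, y ∈ K → ∀ ⦃t : ℝ⦄, 0 ≤ t → t ≤ 1 →
    F (t • x + (1 - t) • y) ≤ t * F x + (1 - t) * F y - α / 2 * t * (1 - t) * ‖x - y‖ ^ 2

section NormedSpace

variable {E : Type*} [NormedAddCommGroup E] [NormedSpace ℝ E]

lemma StrongConvexOnSet.strongConvexOn {K : Set E} {α : ℝ} {F : E → ℝ}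
    (h : StrongConvexOnSet K α F) (hK : Convex ℝ K) : StrongConvexOn K α F := by
  refine ⟨hK, fun x hx y hy a b ha hb hab => ?_⟩
  obtain rfl : b = 1 - a := by linarith
  have := h hx hy ha (by linarith)
  simp only [smul_eq_mul]
  linarith

end NormedSpace

section InnerProductSpace

variable {E : Type*} [NormedAddCommGroup E] [InnerProductSpace ℝ E]

lemma breg_three_point (R : E → ℝ) (gradR : E → E) (q x y : E) :
    ⟪gradR x - gradR y, y - q⟫ = breg R gradR q x - breg R gradR q y - breg R gradR y x := by
  simp only [breg, inner_sub_left, inner_sub_right]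
  ring

lemma breg_sub_half_sq_norm (R : E → ℝ) (gradR : E → E) (α : ℝ) (z x : E) :
    breg (fun p => R p - α / 2 * ‖p‖ ^ 2) (fun p => gradR p - α • p) z x
      = breg R gradR z x - α / 2 * ‖z - x‖ ^ 2 := by
  simp only [breg, norm_sub_sq_real, inner_sub_left, inner_sub_right, real_inner_smul_left,
    real_inner_self_eq_norm_sq, real_inner_comm x z]
  ring

lemma ConvexOn.breg_nonneg {s : Set E} {f : E → ℝ} {gradf : E → E} (hf : ConvexOn ℝ s f)
    {x z : E} (hx : x ∈ s) (hz : z ∈ s) (hd : HasFDerivAt f (innerSL ℝ (gradf x)) x) :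
    0 ≤ breg f gradf z x := by
  set L : ℝ →ᵃ[ℝ] E := AffineMap.lineMap x z
  have hL : HasDerivAt (f ∘ L) ⟪gradf x, z - x⟫ 0 := by
    simpa using hd.comp_hasDerivAt_of_eq (0 : ℝ) AffineMap.hasDerivAt_lineMap
      (AffineMap.lineMap_apply_zero x z).symm
  have hslope := (hf.comp_affineMap L).le_slope_of_hasDerivAt (x := 0) (y := 1)
    (by simpa [L] using hx) (by simpa [L] using hz) zero_lt_one hL
  simp only [slope_def_field, Function.comp_apply, AffineMap.lineMap_apply_one,
    AffineMap.lineMap_apply_zero, sub_zero, div_one, L] at hslope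
  simp only [breg]
  linarith

lemma StrongConvexOnSet.half_sq_norm_le_breg {s : Set E} {α : ℝ} {R : E → ℝ} {gradR : E → E}
    (h : StrongConvexOnSet s α R) (hs : Convex ℝ s) {x z : E} (hx : x ∈ s) (hz : z ∈ s)
    (hd : HasFDerivAt R (innerSL ℝ (gradR x)) x) :
    α / 2 * ‖z - x‖ ^ 2 ≤ breg R gradR z x := by
  have hconv := strongConvexOn_iff_convex.mp (h.strongConvexOn hs)
  have hd' : HasFDerivAt (fun p => R p - α / 2 * ‖p‖ ^ 2) (innerSL ℝ (gradR x - α • x)) x := by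
    refine (hd.sub ((hasStrictFDerivAt_norm_sq x).hasFDerivAt.const_mul (α / 2))).congr_fderiv ?_
    ext v
    simp only [sub_apply, coe_innerSL_apply, smul_apply,
      nsmul_eq_mul, Nat.cast_ofNat, smul_eq_mul, map_sub, map_smul, sub_right_inj]
    ring
  have hnonneg := hconv.breg_nonneg (gradf := fun p => gradR p - α • p) hx hz hd'
  rw [breg_sub_half_sq_norm] at hnonneg
  linarith

lemma real_inner_le_sq_norm_div_add {α : ℝ} (hα : 0 < α) (a b : E) :
    ⟪a, b⟫ ≤ ‖a‖ ^ 2 / (2 * α) + α / 2 * ‖b‖ ^ 2 := by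
  have h := sq_nonneg ‖a - α • b‖
  rw [norm_sub_sq_real, inner_smul_right, norm_smul, Real.norm_of_nonneg hα.le] at h
  rw [div_add' _ _ _ (by positivity), le_div_iff₀ (by positivity)]
  nlinarith

theorem Finset.sum_Icc_one_sub_telescope {M : Type*} [AddCommGroup M] (f : ℕ → M) (N : ℕ) :
    ∑ n ∈ Finset.Icc 1 N, (f (n - 1) - f n) = f 0 - f N := by
  induction N with
  | zero => simp
  | succ N ih =>
    rw [Finset.sum_Icc_succ_top (by omega), ih, Nat.add_sub_cancel]
    abel

lemma weighted_regret_le_of_prediction_correction {R₀ R₁ : E → ℝ} {grad₀ grad₁ : E → E}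
    {α₀ α₁ w : ℝ} (hα₁ : 0 < α₁) {g ĝ x y x' q : E}
    (hB₀ : α₀ / 2 * ‖y - x‖ ^ 2 ≤ breg R₀ grad₀ y x)
    (hB₁ : α₁ / 2 * ‖x' - y‖ ^ 2 ≤ breg R₁ grad₁ x' y)
    (hpred : ⟪w • ĝ + grad₀ y - grad₀ x, y - q⟫ ≤ 0)
    (hcorr : ⟪w • (g - ĝ) + grad₁ x' - grad₁ y, x' - q⟫ ≤ 0) :
    w * ⟪g, y - q⟫ ≤ (breg R₀ grad₀ q x - breg R₁ grad₁ q x')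
      + (breg R₁ grad₁ q y - breg R₀ grad₀ q y)
      + (w ^ 2 / (2 * α₁) * ‖g - ĝ‖ ^ 2 - α₀ / 2 * ‖y - x‖ ^ 2) := by
  have three₀ := breg_three_point R₀ grad₀ q x y
  have three₁ := breg_three_point R₁ grad₁ q y x'
  have young := real_inner_le_sq_norm_div_add hα₁ (w • (g - ĝ)) (y - x')
  rw [norm_smul, mul_pow, Real.norm_eq_abs, sq_abs, norm_sub_rev y x'] at young
  have split : w * ⟪g, y - q⟫
      = ⟪w • ĝ, y - q⟫ + ⟪w • (g - ĝ), y - x'⟫ + ⟪w • (g - ĝ), x' - q⟫ := by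
    simp only [real_inner_smul_left, inner_sub_left, inner_sub_right]
    ring
  simp only [inner_add_left, inner_sub_left] at hpred hcorr three₀ three₁
  have hcoeff : w ^ 2 * ‖g - ĝ‖ ^ 2 / (2 * α₁) = w ^ 2 / (2 * α₁) * ‖g - ĝ‖ ^ 2 := by ring
  linarith

end InnerProductSpace

theorem piccolo_mirror_descent_regret_general
    {E : Type*} [NormedAddCommGroup E] [InnerProductSpace ℝ E]
    (Pset : Set E)
    (N : ℕ)
    (w : ℕ → ℝ)
    (g ghat : ℕ → E)
    (R : ℕ → E → ℝ) (gradR : ℕ → E → E)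
    (hR : ∀ n, n ≤ N → ∀ p : E, HasFDerivAt (R n) (innerSL ℝ (gradR n p)) p)
    (α : ℕ → ℝ) (hα : ∀ n, n ≤ N → 0 < α n)
    (hsc : ∀ n, n ≤ N → StrongConvexOnSet (Set.univ : Set E) (α n) (R n))
    (MN : ℝ) (πh π : ℕ → E)
    (hpred : ∀ n, 1 ≤ n → n ≤ N → ∀ q ∈ Pset,
      ⟪w n • ghat n + gradR (n - 1) (π n) - gradR (n - 1) (πh n), π n - q⟫ ≤ 0)
    (hcorr : ∀ n, 1 ≤ n → n ≤ N → ∀ q ∈ Pset,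
      ⟪w n • (g n - ghat n) + gradR n (πh (n + 1)) - gradR n (π n), πh (n + 1) - q⟫ ≤ 0)
    (hreg : ∀ q ∈ Pset,
      breg (R 0) (gradR 0) q (πh 1)
        + ∑ n ∈ Finset.Icc 1 N,
            (breg (R n) (gradR n) q (π n) - breg (R (n - 1)) (gradR (n - 1)) q (π n)) ≤ MN) :
    ∀ q ∈ Pset,
      ∑ n ∈ Finset.Icc 1 N, w n * ⟪g n, π n - q⟫
        ≤ MN + ∑ n ∈ Finset.Icc 1 N,
            ((w n) ^ 2 / (2 * α n) * ‖g n - ghat n‖ ^ 2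
              - α (n - 1) / 2 * ‖π n - πh n‖ ^ 2) := by
  intro q hq
  have hbreg : ∀ m ≤ N, ∀ z x, α m / 2 * ‖z - x‖ ^ 2 ≤ breg (R m) (gradR m) z x :=
    fun m hm z x => (hsc m hm).half_sq_norm_le_breg convex_univ trivial trivial (hR m hm x)
  set T : ℕ → ℝ := fun m => breg (R m) (gradR m) q (πh (m + 1))
  have hround : ∀ n ∈ Finset.Icc 1 N, w n * ⟪g n, π n - q⟫
      ≤ (T (n - 1) - T n)
        + (breg (R n) (gradR n) q (π n) - breg (R (n - 1)) (gradR (n - 1)) q (π n))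
        + ((w n) ^ 2 / (2 * α n) * ‖g n - ghat n‖ ^ 2 - α (n - 1) / 2 * ‖π n - πh n‖ ^ 2) := by
    intro n hn
    obtain ⟨hn1, hnN⟩ := Finset.mem_Icc.mp hn
    have hT : T (n - 1) = breg (R (n - 1)) (gradR (n - 1)) q (πh n) := by
      simp only [T, Nat.sub_add_cancel hn1]
    rw [hT]
    exact weighted_regret_le_of_prediction_correction (hα n hnN) (hbreg (n - 1) (by omega) _ _)
      (hbreg n hnN _ _) (hpred n hn1 hnN q hq) (hcorr n hn1 hnN q hq)
  have hTN : 0 ≤ T N :=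
    (hbreg N le_rfl _ _).trans' (mul_nonneg (half_pos (hα N le_rfl)).le (sq_nonneg _))
  have hsum := Finset.sum_le_sum hround
  rw [Finset.sum_add_distrib, Finset.sum_add_distrib, Finset.sum_Icc_one_sub_telescope] at hsum
  linarith [hreg q hq]

/-- Regret bound of PicCoLO with a mirror-descent base algorithm
(Proposition 1 / Theorem 1).  `π n` is the Prediction-Step decision,
`πh n` is `π̂_n`, and `e n = g n − ĝ n` is written inline. -/
theorem piccolo_mirror_descent_regret
    {E : Type*} [NormedAddCommGroup E] [InnerProductSpace ℝ E]
    (Pset : Set E) (hne : Pset.Nonempty) (hconv : Convex ℝ Pset)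
    (N : ℕ) (hN : 1 ≤ N)
    (w : ℕ → ℝ) (hw : ∀ n, 1 ≤ n → n ≤ N → 0 < w n)
    (g ghat : ℕ → E)
    (R : ℕ → E → ℝ) (gradR : ℕ → E → E)
    (hR : ∀ n, n ≤ N → ∀ p : E, HasFDerivAt (R n) (innerSL ℝ (gradR n p)) p)
    (α : ℕ → ℝ) (hα : ∀ n, n ≤ N → 0 < α n)
    (hsc : ∀ n, n ≤ N → StrongConvexOnSet (Set.univ : Set E) (α n) (R n))
    (MN : ℝ) (πh π : ℕ → E)
    (hπh : ∀ n, 1 ≤ n → n ≤ N + 1 → πh n ∈ Pset)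
    (hπ : ∀ n, 1 ≤ n → n ≤ N → π n ∈ Pset)
    (hpred : ∀ n, 1 ≤ n → n ≤ N → ∀ q ∈ Pset,
      ⟪w n • ghat n + gradR (n - 1) (π n) - gradR (n - 1) (πh n), π n - q⟫ ≤ 0)
    (hcorr : ∀ n, 1 ≤ n → n ≤ N → ∀ q ∈ Pset,
      ⟪w n • (g n - ghat n) + gradR n (πh (n + 1)) - gradR n (π n), πh (n + 1) - q⟫ ≤ 0)
    (hreg : ∀ q ∈ Pset,
      breg (R 0) (gradR 0) q (πh 1)
        + ∑ n ∈ Finset.Icc 1 N,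
            (breg (R n) (gradR n) q (π n) - breg (R (n - 1)) (gradR (n - 1)) q (π n)) ≤ MN) :
    ∀ q ∈ Pset,
      ∑ n ∈ Finset.Icc 1 N, w n * ⟪g n, π n - q⟫
        ≤ MN + ∑ n ∈ Finset.Icc 1 N,
            ((w n) ^ 2 / (2 * α n) * ‖g n - ghat n‖ ^ 2
              - α (n - 1) / 2 * ‖π n - πh n‖ ^ 2) :=
  piccolo_mirror_descent_regret_general Pset N w g ghat R gradR hR α hα hsc MN πh π hpred hcorr hreg
end

section
/- (Reduction of predictable online learning to FTL.) Let Π be a nonempty set, N ≥ 1, and let l_1, …, l_N : Π → ℝ be a predictable loss sequence with predictions l̂_1, …, l̂_N : Π → ℝ. Suppose the decisions are generated by Follow-the-Leader on the transformed sequence l̂_1, l_1 − l̂_1, l̂_2, l_2 − l̂_2, …; concretely, assume that for each n: π̂_n ∈ Π minimizes l_{1:n−1} over Π (π̂_1 ∈ Π arbitrary), and π_n ∈ Π minimizes π ↦ l_{1:n−1}(π) + l̂_n(π) over Π. For each n let π_n^⋆ ∈ Π minimize l_{1:n} over Π, and define Δ_1 := 0 and Δ_n := l_{1:n−1}(π_n)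 − l_{1:n−1}(π̂_n) for n ≥ 2. Then Σ_{n=1}^N l_n(π_n) − l_{1:N}(π_N^⋆) ≤ Σ_{n=1}^N ( l_{1:n}(π_n) − l_{1:n}(π_n^⋆) − Δ_n ), i.e., the bound of the Stronger FTL Lemma holds for the sequence {π_n}. -/
/-!
Writing `L n := l_{1:n}`, each played loss is `l_n(π_n) = L n (π_n) - L (n-1) (π_n)`, and the
comparator loss `L N (π⋆_N)` telescopes along the leaders `π⋆_n` (with `L 0 = 0`). Hence the
regret equals `∑ (L n (π_n) - L n (π⋆_n)) - ∑ (L (n-1) (π_n) - L (n-1) (π⋆_{n-1}))` for any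
decisions whatsoever (the Stronger FTL Lemma). Since `π⋆_{n-1}` minimizes `L (n-1)`, every
`Δ_n = L (n-1) (π_n) - L (n-1) (π̂_n)` is at most the `n`-th subtracted term.
-/

open Finset

theorem Finset.sum_Icc_one_sub_pred {G : Type*} [AddCommGroup G] (f : ℕ → G) (N : ℕ) :
    ∑ n ∈ Icc 1 N, (f n - f (n - 1)) = f N - f 0 := by
  induction N with
  | zero => simp
  | succ k ih =>
    rw [sum_Icc_succ_top (Nat.succ_le_succ k.zero_le), ih]
    simp

section StrongerFTL

variable {P : Type*} (l : ℕ → P → ℝ)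

def cumulativeLoss (n : ℕ) (q : P) : ℝ := ∑ m ∈ Icc 1 n, l m q

@[simp]
lemma cumulativeLoss_zero (q : P) : cumulativeLoss l 0 q = 0 := by
  simp [cumulativeLoss]

lemma cumulativeLoss_sub_pred {n : ℕ} (hn : 1 ≤ n) (q : P) :
    cumulativeLoss l n q - cumulativeLoss l (n - 1) q = l n q := by
  obtain ⟨k, rfl⟩ : ∃ k, n = k + 1 := ⟨n - 1, by omega⟩
  simp [cumulativeLoss, sum_Icc_succ_top (Nat.succ_le_succ k.zero_le)]

theorem regret_eq_stronger_ftl (π πstar : ℕ → P) (N : ℕ) :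
    ∑ n ∈ Icc 1 N, l n (π n) - cumulativeLoss l N (πstar N)
      = ∑ n ∈ Icc 1 N,
          ((cumulativeLoss l n (π n) - cumulativeLoss l n (πstar n))
            - (cumulativeLoss l (n - 1) (π n) - cumulativeLoss l (n - 1) (πstar (n - 1)))) := by
  have played : ∑ n ∈ Icc 1 N, l n (π n)
      = ∑ n ∈ Icc 1 N, (cumulativeLoss l n (π n) - cumulativeLoss l (n - 1) (π n)) :=
    sum_congr rfl fun n hn => (cumulativeLoss_sub_pred l (mem_Icc.mp hn).1 _).symm
  have comparator : cumulativeLoss l N (πstar N)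
      = ∑ n ∈ Icc 1 N,
          (cumulativeLoss l n (πstar n) - cumulativeLoss l (n - 1) (πstar (n - 1))) := by
    rw [sum_Icc_one_sub_pred (fun n => cumulativeLoss l n (πstar n)), cumulativeLoss_zero,
      sub_zero]
  rw [played, comparator, ← sum_sub_distrib]
  exact sum_congr rfl fun n _ => by ring

theorem regret_le_stronger_ftl (π πstar : ℕ → P) (N : ℕ) (Δ : ℕ → ℝ)
    (hΔ : ∀ n, 1 ≤ n → n ≤ N →
      Δ n ≤ cumulativeLoss l (n - 1) (π n) - cumulativeLoss l (n - 1) (πstar (n - 1))) :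
    ∑ n ∈ Icc 1 N, l n (π n) - cumulativeLoss l N (πstar N)
      ≤ ∑ n ∈ Icc 1 N,
          ((cumulativeLoss l n (π n) - cumulativeLoss l n (πstar n)) - Δ n) := by
  rw [regret_eq_stronger_ftl]
  refine sum_le_sum fun n hn => ?_
  obtain ⟨hn1, hnN⟩ := mem_Icc.mp hn
  linarith [hΔ n hn1 hnN]

end StrongerFTL

theorem predictable_ftl_reduction_general {P : Type*} (N : ℕ)
    (l : ℕ → P → ℝ) (π πh πstar : ℕ → P)
    (hstar : ∀ n, 1 ≤ n → n ≤ N → ∀ q : P,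
      ∑ m ∈ Finset.Icc 1 n, l m (πstar n) ≤ ∑ m ∈ Finset.Icc 1 n, l m q)
    (Δ : ℕ → ℝ) (hΔ1 : Δ 1 = 0)
    (hΔ : ∀ n, 2 ≤ n → n ≤ N →
      Δ n = (∑ m ∈ Finset.Icc 1 (n - 1), l m (π n))
              - ∑ m ∈ Finset.Icc 1 (n - 1), l m (πh n)) :
    (∑ n ∈ Finset.Icc 1 N, l n (π n)) - ∑ m ∈ Finset.Icc 1 N, l m (πstar N)
      ≤ ∑ n ∈ Finset.Icc 1 N,
          ((∑ m ∈ Finset.Icc 1 n, l m (π n))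
            - (∑ m ∈ Finset.Icc 1 n, l m (πstar n)) - Δ n) := by
  refine regret_le_stronger_ftl l π πstar N Δ fun n hn1 hnN => ?_
  rcases hn1.eq_or_lt with rfl | hn2
  · simp [hΔ1]
  · have leader_le : cumulativeLoss l (n - 1) (πstar (n - 1)) ≤ cumulativeLoss l (n - 1) (πh n) :=
      hstar (n - 1) (by omega) (by omega) (πh n)
    rw [hΔ n hn2 hnN]
    exact sub_le_sub_left leader_le _

/-- Reduction of predictable online learning to FTL (Proposition 3):
if `π̂_n` minimizes `l_{1:n−1}` and `π_n` minimizes `l_{1:n−1} + l̂_n`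
(i.e. the sequence is generated by FTL on the transformed adversarial
sequence `l̂_1, l_1−l̂_1, l̂_2, l_2−l̂_2, …`), then the Stronger-FTL bound
holds with `Δ_1 = 0` and `Δ_n = l_{1:n−1}(π_n) − l_{1:n−1}(π̂_n)`. -/
theorem predictable_ftl_reduction {P : Type*} [Nonempty P] (N : ℕ) (hN : 1 ≤ N)
    (l lhat : ℕ → P → ℝ) (π πh πstar : ℕ → P)
    (hπh : ∀ n, 2 ≤ n → n ≤ N → ∀ q : P,
      ∑ m ∈ Finset.Icc 1 (n - 1), l m (πh n) ≤ ∑ m ∈ Finset.Icc 1 (n - 1), l m q)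
    (hπ : ∀ n, 1 ≤ n → n ≤ N → ∀ q : P,
      (∑ m ∈ Finset.Icc 1 (n - 1), l m (π n)) + lhat n (π n)
        ≤ (∑ m ∈ Finset.Icc 1 (n - 1), l m q) + lhat n q)
    (hstar : ∀ n, 1 ≤ n → n ≤ N → ∀ q : P,
      ∑ m ∈ Finset.Icc 1 n, l m (πstar n) ≤ ∑ m ∈ Finset.Icc 1 n, l m q)
    (Δ : ℕ → ℝ) (hΔ1 : Δ 1 = 0)
    (hΔ : ∀ n, 2 ≤ n → n ≤ N →
      Δ n = (∑ m ∈ Finset.Icc 1 (n - 1), l m (π n))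
              - ∑ m ∈ Finset.Icc 1 (n - 1), l m (πh n)) :
    (∑ n ∈ Finset.Icc 1 N, l n (π n)) - ∑ m ∈ Finset.Icc 1 N, l m (πstar N)
      ≤ ∑ n ∈ Finset.Icc 1 N,
          ((∑ m ∈ Finset.Icc 1 n, l m (π n))
            - (∑ m ∈ Finset.Icc 1 n, l m (πstar n)) - Δ n) :=
  predictable_ftl_reduction_general N l π πh πstar hstar Δ hΔ1 hΔ
end

section
/- (Linearly perturbed minimizers of a strongly convex function.) Let E be a real inner product space, K ⊆ E a convex set, α > 0, and F : E → ℝ α-strongly convex on K. Let v ∈ E. Suppose x⋆ ∈ K satisfies F(x⋆) ≤ F(z) for all z ∈ K, and x ∈ K minimizes z ↦ F(z) + ⟪v, z⟫ over K. Then F(x) − F(x⋆) ≤ ‖v‖²/(2α). -/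
/-!
Adding the linear term `⟪v, ·⟫` keeps `F` `α`-strongly convex, so its minimizer `x` over `K` has
quadratic growth: `F x + ⟪v, x⟫ + α/2 ‖y - x‖² ≤ F y + ⟪v, y⟫` for every `y ∈ K`. Taking `y = x⋆`
gives `F x - F x⋆ ≤ ⟪v, x⋆ - x⟫ - α/2 ‖x⋆ - x‖²`, and the right-hand side is at most `‖v‖²/(2α)`
by completing the square.
-/

open scoped RealInnerProductSpace

open Filter Set Topology

namespace StrongConvexOnSet

variable {E : Type*} [NormedAddCommGroup E] [NormedSpace ℝ E] {K : Set E} {α : ℝ} {F G : E → ℝ}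

theorem add_convexOn (hF : StrongConvexOnSet K α F) (hG : ConvexOn ℝ K G) :
    StrongConvexOnSet K α (F + G) := by
  intro x hx y hy t ht0 ht1
  have hGt := hG.2 hx hy ht0 (sub_nonneg.2 ht1) (add_sub_cancel t 1)
  simp only [Pi.add_apply, smul_eq_mul] at hGt ⊢
  linarith [hF hx hy ht0 ht1]

theorem add_sq_le_of_isMinOn (hF : StrongConvexOnSet K α F) (hK : Convex ℝ K) {x y : E}
    (hx : x ∈ K) (hy : y ∈ K) (hmin : IsMinOn F K x) :
    F x + α / 2 * ‖y - x‖ ^ 2 ≤ F y := by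
  have hsegment : ∀ t ∈ Ioc (0 : ℝ) 1, F x ≤ F y - α / 2 * (1 - t) * ‖y - x‖ ^ 2 := by
    rintro t ⟨ht0, ht1⟩
    have hxt := isMinOn_iff.1 hmin _ (hK hy hx ht0.le (sub_nonneg.2 ht1) (add_sub_cancel t 1))
    have hconv := hF hy hx ht0.le ht1
    have hscaled : t * F x ≤ t * (F y - α / 2 * (1 - t) * ‖y - x‖ ^ 2) := by linarith
    exact le_of_mul_le_mul_left hscaled ht0
  have hlim : Tendsto (fun t : ℝ ↦ F y - α / 2 * (1 - t) * ‖y - x‖ ^ 2) (𝓝[>] 0)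
      (𝓝 (F y - α / 2 * ‖y - x‖ ^ 2)) := by
    have hcont : Continuous (fun t : ℝ ↦ F y - α / 2 * (1 - t) * ‖y - x‖ ^ 2) := by fun_prop
    simpa using (hcont.tendsto 0).mono_left nhdsWithin_le_nhds
  linarith [ge_of_tendsto hlim (eventually_of_mem (Ioc_mem_nhdsGT one_pos) hsegment)]

end StrongConvexOnSet

/-- The convex conjugate of `α/2 ‖·‖²` is `‖·‖²/(2α)`. -/
theorem real_inner_sub_half_mul_norm_sq_le {E : Type*} [NormedAddCommGroup E]
    [InnerProductSpace ℝ E] {α : ℝ} (hα : 0 < α) (v w : E) :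
    ⟪v, w⟫ - α / 2 * ‖w‖ ^ 2 ≤ ‖v‖ ^ 2 / (2 * α) := by
  have hcs := real_inner_le_norm v w
  rw [le_div_iff₀ (by positivity)]
  nlinarith [sq_nonneg (‖v‖ - α * ‖w‖)]

theorem strongConvex_linear_perturbation_stability_general
    {E : Type*} [NormedAddCommGroup E] [InnerProductSpace ℝ E]
    (K : Set E) (hK : Convex ℝ K) (α : ℝ) (hα : 0 < α)
    (F : E → ℝ) (hF : StrongConvexOnSet K α F) (v : E)
    (xs : E) (hxs : xs ∈ K)
    (x : E) (hx : x ∈ K) (hxmin : ∀ z ∈ K, F x + ⟪v, x⟫ ≤ F z + ⟪v, z⟫) :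
    F x - F xs ≤ ‖v‖ ^ 2 / (2 * α) := by
  have hperturbed : StrongConvexOnSet K α (F + fun z ↦ ⟪v, z⟫) :=
    hF.add_convexOn ((innerₗ E v).convexOn hK)
  have hgrowth := hperturbed.add_sq_le_of_isMinOn hK hx hxs (isMinOn_iff.2 hxmin)
  have hconj := real_inner_sub_half_mul_norm_sq_le hα v (xs - x)
  simp only [Pi.add_apply, inner_sub_right] at hgrowth hconj
  linarith

/-- Linearly perturbed minimizers of a strongly convex function:
if `x⋆` minimizes `F` over `K` and `x` minimizes `z ↦ F z + ⟪v, z⟫` over `K`,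
then `F x − F x⋆ ≤ ‖v‖²/(2α)`. -/
theorem strongConvex_linear_perturbation_stability
    {E : Type*} [NormedAddCommGroup E] [InnerProductSpace ℝ E]
    (K : Set E) (hK : Convex ℝ K) (α : ℝ) (hα : 0 < α)
    (F : E → ℝ) (hF : StrongConvexOnSet K α F) (v : E)
    (xs : E) (hxs : xs ∈ K) (hmin : ∀ z ∈ K, F xs ≤ F z)
    (x : E) (hx : x ∈ K) (hxmin : ∀ z ∈ K, F x + ⟪v, x⟫ ≤ F z + ⟪v, z⟫) :
    F x - F xs ≤ ‖v‖ ^ 2 / (2 * α) :=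
  strongConvex_linear_perturbation_stability_general K hK α hα F hF v xs hxs x hx hxmin
end

section
/- (Reduction of RL to online learning; deterministic form of Lemma 3.) Let Π be a nonempty set, N ≥ 1, and let w_1, …, w_N be positive reals with w_1 = 1 satisfying w_{n+k}·w_m ≤ w_{m+k}·w_n for all indices with 1 ≤ m ≤ n and n + k ≤ N. Let l_1, …, l_N : Π → ℝ, let π_1, …, π_N ∈ Π with l_n(π_n) ≥ 0 for every 2 ≤ n ≤ N, and let J_0, J_1, …, J_N ∈ ℝ satisfy J_n = J_{n−1} + l_n(π_n) for every n. For each n let π_n^⋆ ∈ Π satisfy Σ_{m=1}^n w_m·l_m(π_n^⋆) ≤ Σ_{m=1}^n w_m·l_m(π) for all π ∈ Π, and define Regret_n := Σ_{m=1}^n w_m·l_m(π_m) − Σ_{m=1}^n w_m·l_m(π_n^⋆) and ε_n := (1/w_{1:n})·Σ_{m=1}^n w_m·l_m(π_n^⋆). Then Σ_{n=1}^N (w_n/w_{1:N})·J_n ≤ J_0 + Σ_{n=1}^N (w_{N−n+1}/w_{1:N})·( Regret_n + w_{1:n}·ε_n ). -/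
/-!
Telescoping gives `J_n = J_0 + ∑_{m ≤ n} l_m(π_m)`, and
`Regret_n + w_{1:n} ε_n = ∑_{m ≤ n} w_m l_m(π_m)`. After exchanging the order of summation both
sides become `∑_m c_m l_m(π_m)`: on the left `c_m = ∑_{n=m}^N w_n`, on the right
`c_m = w_m ∑_{j=1}^{N-m+1} w_j`. The ratio condition with `m = 1` makes `w` submultiplicative,
`w_{n+k} ≤ w_{1+k} w_n`, so the left coefficient is at most the right one, with equality for
`m = 1` because `w_1 = 1`; the remaining terms `l_m(π_m)`, `m ≥ 2`, are nonnegative.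
-/

open Finset

lemma sum_Icc_mul_sum_Icc_eq {R : Type*} [NonUnitalNonAssocSemiring R] (N : ℕ) (v b : ℕ → R) :
    ∑ n ∈ Icc 1 N, v n * ∑ m ∈ Icc 1 n, b m = ∑ m ∈ Icc 1 N, (∑ n ∈ Icc m N, v n) * b m := by
  simp_rw [mul_sum, sum_mul]
  exact sum_comm' fun n m => by simp only [mem_Icc]; omega

lemma sum_Icc_reflect {M : Type*} [AddCommMonoid M] (f : ℕ → M) (m N : ℕ) :
    ∑ n ∈ Icc m N, f (N - n + 1) = ∑ n ∈ Icc m N, f (n - m + 1) := by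
  refine sum_nbij' (fun n => N + m - n) (fun n => N + m - n) ?_ ?_ ?_ ?_ ?_ <;>
    intro n hn <;> simp only [mem_Icc] at hn ⊢
  any_goals omega
  congr 1; omega

section Submultiplicative

variable {R : Type*} [CommSemiring R] [PartialOrder R] [IsOrderedRing R] {w : ℕ → R} {N : ℕ}
  (hsub : ∀ n k, 1 ≤ n → n + k ≤ N → w (n + k) ≤ w (1 + k) * w n)
include hsub

lemma sum_Icc_le_mul_sum_Icc_reflect {m : ℕ} (hm : 1 ≤ m) :
    ∑ n ∈ Icc m N, w n ≤ w m * ∑ n ∈ Icc m N, w (N - n + 1) := by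
  rw [sum_Icc_reflect, mul_sum]
  refine sum_le_sum fun n hn => ?_
  obtain ⟨hmn, hnN⟩ := mem_Icc.mp hn
  have h := hsub (n - m + 1) (m - 1) (by omega) (by omega)
  rwa [show n - m + 1 + (m - 1) = n by omega, show 1 + (m - 1) = m by omega] at h

lemma sum_Icc_mul_cumsum_le (hw1 : w 1 = 1) {a : ℕ → R}
    (ha : ∀ m, 2 ≤ m → m ≤ N → 0 ≤ a m) :
    ∑ n ∈ Icc 1 N, w n * ∑ m ∈ Icc 1 n, a m
      ≤ ∑ n ∈ Icc 1 N, w (N - n + 1) * ∑ m ∈ Icc 1 n, w m * a m := by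
  rw [sum_Icc_mul_sum_Icc_eq, sum_Icc_mul_sum_Icc_eq]
  refine sum_le_sum fun m hm => ?_
  obtain ⟨h1, hmN⟩ := mem_Icc.mp hm
  rw [← mul_assoc, mul_comm _ (w m)]
  rcases h1.eq_or_lt with rfl | h2
  · rw [hw1, one_mul, sum_Icc_reflect]
    refine le_of_eq (congrArg (· * a 1) (sum_congr rfl fun n hn => ?_))
    rw [Nat.sub_add_cancel (mem_Icc.mp hn).1]
  · exact mul_le_mul_of_nonneg_right (sum_Icc_le_mul_sum_Icc_reflect hsub h1) (ha m h2 hmN)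

end Submultiplicative

lemma eq_add_sum_Icc_of_eq_add {M : Type*} [AddCommMonoid M] {J a : ℕ → M} {N : ℕ}
    (hJ : ∀ n, 1 ≤ n → n ≤ N → J n = J (n - 1) + a n) :
    ∀ n ≤ N, J n = J 0 + ∑ m ∈ Icc 1 n, a m := by
  intro n
  induction n with
  | zero => simp
  | succ k ih =>
    intro hk
    rw [hJ (k + 1) (by omega) hk, Nat.add_sub_cancel, ih (by omega),
      sum_Icc_succ_top (by omega), add_assoc]

theorem rl_reduction_to_online_learning_general
    {P : Type*} (N : ℕ) (hN : 1 ≤ N)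
    (w : ℕ → ℝ) (hwpos : ∀ n, 1 ≤ n → n ≤ N → 0 < w n) (hw1 : w 1 = 1)
    (hratio : ∀ m n k : ℕ, 1 ≤ m → m ≤ n → n + k ≤ N →
      w (n + k) * w m ≤ w (m + k) * w n)
    (l : ℕ → P → ℝ) (π : ℕ → P)
    (hl : ∀ n, 2 ≤ n → n ≤ N → 0 ≤ l n (π n))
    (J : ℕ → ℝ) (hJ : ∀ n, 1 ≤ n → n ≤ N → J n = J (n - 1) + l n (π n))
    (πstar : ℕ → P)
    (Reg ε : ℕ → ℝ)
    (hReg : ∀ n, 1 ≤ n → n ≤ N →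
      Reg n = (∑ m ∈ Finset.Icc 1 n, w m * l m (π m))
                - ∑ m ∈ Finset.Icc 1 n, w m * l m (πstar n))
    (hε : ∀ n, 1 ≤ n → n ≤ N →
      ε n = (1 / ∑ m ∈ Finset.Icc 1 n, w m) * ∑ m ∈ Finset.Icc 1 n, w m * l m (πstar n)) :
    ∑ n ∈ Finset.Icc 1 N, (w n / ∑ m ∈ Finset.Icc 1 N, w m) * J n
      ≤ J 0 + ∑ n ∈ Finset.Icc 1 N,
          (w (N - n + 1) / ∑ m ∈ Finset.Icc 1 N, w m)
            * (Reg n + (∑ m ∈ Finset.Icc 1 n, w m) * ε n) := by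
  have hpartial : ∀ n, 1 ≤ n → n ≤ N → 0 < ∑ m ∈ Icc 1 n, w m := fun n h1 hn =>
    sum_pos (fun m hm => hwpos m (mem_Icc.mp hm).1 ((mem_Icc.mp hm).2.trans hn))
      ⟨1, mem_Icc.mpr ⟨le_rfl, h1⟩⟩
  set W := ∑ m ∈ Icc 1 N, w m
  have hW : 0 < W := hpartial N hN le_rfl
  have hregret : ∀ n ∈ Icc 1 N,
      Reg n + (∑ m ∈ Icc 1 n, w m) * ε n = ∑ m ∈ Icc 1 n, w m * l m (π m) := by
    intro n hn
    obtain ⟨h1, hnN⟩ := mem_Icc.mp hn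
    rw [hReg n h1 hnN, hε n h1 hnN, ← mul_assoc, mul_one_div_cancel (hpartial n h1 hnN).ne']
    ring
  have hsub : ∀ n k, 1 ≤ n → n + k ≤ N → w (n + k) ≤ w (1 + k) * w n := fun n k hn hnk => by
    simpa [hw1] using hratio 1 n k le_rfl hn hnk
  have hJsum := eq_add_sum_Icc_of_eq_add hJ
  calc ∑ n ∈ Icc 1 N, (w n / W) * J n
      = ∑ n ∈ Icc 1 N, (w n / W * J 0 + w n * (∑ m ∈ Icc 1 n, l m (π m)) / W) :=
        sum_congr rfl fun n hn => by rw [hJsum n (mem_Icc.mp hn).2]; ring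
    _ = J 0 + (∑ n ∈ Icc 1 N, w n * ∑ m ∈ Icc 1 n, l m (π m)) / W := by
        rw [sum_add_distrib, ← sum_mul, ← sum_div, ← sum_div, div_self hW.ne', one_mul]
    _ ≤ J 0 + (∑ n ∈ Icc 1 N, w (N - n + 1) * ∑ m ∈ Icc 1 n, w m * l m (π m)) / W := by
        gcongr J 0 + ?_ / W
        exact sum_Icc_mul_cumsum_le hsub hw1 hl
    _ = J 0 + ∑ n ∈ Icc 1 N, (w (N - n + 1) / W) * (Reg n + (∑ m ∈ Icc 1 n, w m) * ε n) := by
        rw [sum_div]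
        refine congrArg (J 0 + ·) (sum_congr rfl fun n hn => ?_)
        rw [hregret n hn]
        ring

/-- Reduction of RL to online learning (deterministic form of Lemma 3):
`J_n = J_{n−1} + l_n(π_n)` with `l_n(π_n) ≥ 0` for `n ≥ 2`, and the weighted
average performance is bounded by
`J_0 + ∑_n (w_{N−n+1}/w_{1:N})(Regret_n + w_{1:n}·ε_n)`. -/
theorem rl_reduction_to_online_learning
    {P : Type*} [Nonempty P] (N : ℕ) (hN : 1 ≤ N)
    (w : ℕ → ℝ) (hwpos : ∀ n, 1 ≤ n → n ≤ N → 0 < w n) (hw1 : w 1 = 1)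
    (hratio : ∀ m n k : ℕ, 1 ≤ m → m ≤ n → n + k ≤ N →
      w (n + k) * w m ≤ w (m + k) * w n)
    (l : ℕ → P → ℝ) (π : ℕ → P)
    (hl : ∀ n, 2 ≤ n → n ≤ N → 0 ≤ l n (π n))
    (J : ℕ → ℝ) (hJ : ∀ n, 1 ≤ n → n ≤ N → J n = J (n - 1) + l n (π n))
    (πstar : ℕ → P)
    (hstar : ∀ n, 1 ≤ n → n ≤ N → ∀ q : P,
      ∑ m ∈ Finset.Icc 1 n, w m * l m (πstar n) ≤ ∑ m ∈ Finset.Icc 1 n, w m * l m q)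
    (Reg ε : ℕ → ℝ)
    (hReg : ∀ n, 1 ≤ n → n ≤ N →
      Reg n = (∑ m ∈ Finset.Icc 1 n, w m * l m (π m))
                - ∑ m ∈ Finset.Icc 1 n, w m * l m (πstar n))
    (hε : ∀ n, 1 ≤ n → n ≤ N →
      ε n = (1 / ∑ m ∈ Finset.Icc 1 n, w m) * ∑ m ∈ Finset.Icc 1 n, w m * l m (πstar n)) :
    ∑ n ∈ Finset.Icc 1 N, (w n / ∑ m ∈ Finset.Icc 1 N, w m) * J n
      ≤ J 0 + ∑ n ∈ Finset.Icc 1 N,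
          (w (N - n + 1) / ∑ m ∈ Finset.Icc 1 N, w m)
            * (Reg n + (∑ m ∈ Finset.Icc 1 n, w m) * ε n) :=
  rl_reduction_to_online_learning_general N hN w hwpos hw1 hratio l π hl J hJ πstar Reg ε hReg hε
end
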